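/- Unification is idempotent with respect to the order ≼: for abstract feature structures A and B, A ⊔ B = A if and only if B ≼ A. -/

import Mathlib

/-- A pre-abstract feature structure: a partial assignment of types to paths
(whose domain is the path set `Π`) together with a reentrancy relation. -/
structure PreAFS (F T : Type*) where
  theta : List F → Option T
  rel : List F → List F → Prop

/-- The path set `Π` of a pre-AFS. -/
def PreAFS.dom {F T : Type*} (A : PreAFS F T) : Set (List F) :=
  {π | (A.theta π).isSome}

/-- The pre-AFS conditions: `Π` is nonempty and `≈ ⊆ Π × Π`. -/
def IsPreAFS {F T : Type*} (A : PreAFS F T) : Prop :=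
  A.dom.Nonempty ∧ ∀ π₁ π₂, A.rel π₁ π₂ → π₁ ∈ A.dom ∧ π₂ ∈ A.dom

/-- `Π` is prefix-closed. -/
def PrefixClosed {F T : Type*} (A : PreAFS F T) : Prop :=
  ∀ π α : List F, π ++ α ∈ A.dom → π ∈ A.dom

/-- Fusion-closedness. -/
def FusionClosed {F T : Type*} (A : PreAFS F T) : Prop :=
  ∀ π π' α α' : List F, π ++ α ∈ A.dom → π' ++ α' ∈ A.dom → A.rel π π' →
    π ++ α' ∈ A.dom ∧ π' ++ α ∈ A.dom ∧
    A.rel (π ++ α') (π' ++ α') ∧ A.rel (π' ++ α) (π ++ α)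

/-- `≈` is an equivalence relation on `Π`. -/
def EquivOnDom {F T : Type*} (A : PreAFS F T) : Prop :=
  (∀ π ∈ A.dom, A.rel π π) ∧
  (∀ π₁ π₂, A.rel π₁ π₂ → A.rel π₂ π₁) ∧
  (∀ π₁ π₂ π₃, A.rel π₁ π₂ → A.rel π₂ π₃ → A.rel π₁ π₃)

/-- `≈` has finitely many equivalence classes. -/
def FiniteIndex {F T : Type*} (A : PreAFS F T) : Prop :=
  {C : Set (List F) | ∃ π ∈ A.dom, C = {π' | A.rel π π'}}.Finite

/-- `Θ` respects the equivalence `≈`. -/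
def RespectsRel {F T : Type*} (A : PreAFS F T) : Prop :=
  ∀ π₁ π₂, A.rel π₁ π₂ → A.theta π₁ = A.theta π₂

/-- Abstract feature structures. -/
def IsAFS {F T : Type*} (A : PreAFS F T) : Prop :=
  IsPreAFS A ∧ PrefixClosed A ∧ FusionClosed A ∧
    EquivOnDom A ∧ FiniteIndex A ∧ RespectsRel A

/-- Bounded completeness: every up-bounded subset has a least upper bound. -/
def BddCompleteTypes (T : Type*) [PartialOrder T] : Prop :=
  ∀ S : Set T, (∃ u, ∀ t ∈ S, t ≤ u) → ∃ l, IsLUB S l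

/-- The order `≼` on (pre-)AFSs. -/
def AbsLE {F T : Type*} [PartialOrder T] (A B : PreAFS F T) : Prop :=
  A.dom ⊆ B.dom ∧
  (∀ π₁ π₂, A.rel π₁ π₂ → B.rel π₁ π₂) ∧
  ∀ π ∈ A.dom, ∀ t₁ t₂ : T, A.theta π = some t₁ → B.theta π = some t₂ → t₁ ≤ t₂

/-- Fusion-closedness of a pair (path set, relation). -/
def fusionClosedPair {F : Type*} (D : Set (List F)) (R : List F → List F → Prop) : Prop :=
  ∀ π π' α α' : List F, π ++ α ∈ D → π' ++ α' ∈ D → R π π' →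
    π ++ α' ∈ D ∧ π' ++ α ∈ D ∧ R (π ++ α') (π' ++ α') ∧ R (π' ++ α) (π ++ α)

/-- The path set of the least fusion-closed extension. -/
def clDom {F T : Type*} (A : PreAFS F T) : Set (List F) :=
  {π | ∀ (D : Set (List F)) (R : List F → List F → Prop),
    A.dom ⊆ D → (∀ x y, A.rel x y → R x y) → fusionClosedPair D R → π ∈ D}

/-- The reentrancy relation of the least fusion-closed extension. -/
def clRel {F T : Type*} (A : PreAFS F T) (x y : List F) : Prop :=
  ∀ (D : Set (List F)) (R : List F → List F → Prop),
    A.dom ⊆ D → (∀ a b, A.rel a b → R a b) → fusionClosedPair D R → R x y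

open Classical in
/-- `Cl(A)`: the least extension of `A` to a fusion-closed pre-AFS
(`Θ` is kept on old paths; newly added paths get the trivial type `⊥`,
to be fixed up later by `Ty`). -/
noncomputable def Cl {F T : Type*} [CompleteLattice T] (A : PreAFS F T) : PreAFS F T :=
  ⟨fun π => if π ∈ clDom A then some ((A.theta π).getD ⊥) else none, clRel A⟩

/-- The least extension of `≈` to an equivalence relation on `Π`. -/
inductive EqClo {F T : Type*} (A : PreAFS F T) : List F → List F → Prop
  | base {x y} : A.rel x y → EqClo A x y
  | refl {x} : x ∈ A.dom → EqClo A x x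
  | symm {x y} : EqClo A x y → EqClo A y x
  | trans {x y z} : EqClo A x y → EqClo A y z → EqClo A x z

/-- `Eq(⟨Π,Θ,≈⟩) = ⟨Π,Θ,≈′⟩` where `≈′` is the least equivalence relation
on `Π` containing `≈`. -/
def EqOp {F T : Type*} (A : PreAFS F T) : PreAFS F T := ⟨A.theta, EqClo A⟩

/-- `Ty(⟨Π,Θ,≈⟩) = ⟨Π,Θ′,≈⟩` where `Θ′(π) = ⊔_{π′ ≈ π} Θ(π′)`. -/
noncomputable def Ty {F T : Type*} [CompleteLattice T] (A : PreAFS F T) : PreAFS F T :=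
  ⟨fun π => if (A.theta π).isSome then
      some (sSup {t | ∃ π', A.rel π π' ∧ A.theta π' = some t})
    else none,
   A.rel⟩

/-- The pre-AFS `C` of the definition of unification: `Π_C = Π_A ∪ Π_B`,
`≈_C = ≈_A ∪ ≈_B`, and `Θ_C` is the pointwise type unification. -/
noncomputable def baseUnif {F T : Type*} [CompleteLattice T] (A B : PreAFS F T) :
    PreAFS F T :=
  ⟨fun π => match A.theta π, B.theta π with
    | some t₁, some t₂ => some (t₁ ⊔ t₂)
    | some t₁, none => some t₁
    | none, some t₂ => some t₂
    | none, none => none,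
   fun x y => A.rel x y ∨ B.rel x y⟩

/-- The unification `A ⊔ B = Ty(Eq(Cl(C)))` of two AFSs. -/
noncomputable def unif {F T : Type*} [CompleteLattice T] (A B : PreAFS F T) : PreAFS F T :=
  Ty (EqOp (Cl (baseUnif A B)))

/-!
Let `C` be the pre-AFS from which `A ⊔ B` is built. Then `B ≼ C`, and each of `Cl`, `Eq`,
`Ty` only grows a structure in `≼` (for `Ty` because `≈` is reflexive after `Eq`); so
`B ≼ A ⊔ B` always, which gives `B ≼ A` once `A ⊔ B = A`. Conversely, if `B ≼ A` then
`C = A`, and `A`, being fusion-closed, an equivalence on its paths and typed compatibly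
with `≈`, is a fixed point of `Cl`, `Eq` and `Ty`.
-/

section

variable {F T : Type*}

theorem PreAFS.ext {A B : PreAFS F T} (hθ : A.theta = B.theta) (hrel : A.rel = B.rel) :
    A = B := by
  cases A; cases B; simp_all

theorem PreAFS.mem_dom_iff {A : PreAFS F T} {π : List F} :
    π ∈ A.dom ↔ ∃ t, A.theta π = some t := by
  simp [PreAFS.dom, Option.isSome_iff_exists]

theorem AbsLE.trans [PartialOrder T] {A B C : PreAFS F T} (hAB : AbsLE A B)
    (hBC : AbsLE B C) : AbsLE A C := by
  refine ⟨hAB.1.trans hBC.1, fun x y h => hBC.2.1 x y (hAB.2.1 x y h), ?_⟩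
  intro π hπ t₁ t₃ hA hC
  obtain ⟨t₂, hB⟩ := PreAFS.mem_dom_iff.1 (hAB.1 hπ)
  exact (hAB.2.2 π hπ t₁ t₂ hA hB).trans (hBC.2.2 π (hAB.1 hπ) t₂ t₃ hB hC)

theorem subset_clDom (A : PreAFS F T) : A.dom ⊆ clDom A :=
  fun _ hπ _ _ hD _ _ => hD hπ

theorem absLE_eqOp [PartialOrder T] (A : PreAFS F T) : AbsLE A (EqOp A) :=
  ⟨subset_rfl, fun _ _ => EqClo.base,
    fun _ _ _ _ h₁ h₂ => (Option.some_inj.1 (h₁.symm.trans h₂)).le⟩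

theorem eqOp_eq_self_of_equivOnDom {A : PreAFS F T} (hA : EquivOnDom A) : EqOp A = A := by
  obtain ⟨hrefl, hsymm, htrans⟩ := hA
  refine PreAFS.ext rfl (funext₂ fun x y => propext ⟨fun h => ?_, EqClo.base⟩)
  induction h with
  | base h => exact h
  | refl h => exact hrefl _ h
  | symm _ ih => exact hsymm _ _ ih
  | trans _ _ ih₁ ih₂ => exact htrans _ _ _ ih₁ ih₂

section Unification

variable [CompleteLattice T]

theorem absLE_baseUnif_right (A B : PreAFS F T) : AbsLE B (baseUnif A B) := by
  refine ⟨fun π hπ => ?_, fun x y h => Or.inr h, fun π _ t₁ t₂ hB hC => ?_⟩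
  · obtain ⟨t, ht⟩ := PreAFS.mem_dom_iff.1 hπ
    rw [PreAFS.mem_dom_iff]
    cases hA : A.theta π <;> simp [baseUnif, hA, ht]
  · cases hA : A.theta π with
    | none =>
      simp only [baseUnif, hA, hB, Option.some_inj] at hC
      exact hC.le
    | some tA =>
      simp only [baseUnif, hA, hB, Option.some_inj] at hC
      exact hC ▸ le_sup_right

theorem baseUnif_eq_left_of_absLE {A B : PreAFS F T} (h : AbsLE B A) : baseUnif A B = A := by
  refine PreAFS.ext (funext fun π => ?_) (funext₂ fun x y => propext ⟨?_, Or.inl⟩)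
  · cases hA : A.theta π with
    | none =>
      cases hB : B.theta π with
      | none => simp [baseUnif, hA, hB]
      | some t => simpa [hA] using PreAFS.mem_dom_iff.1 (h.1 (PreAFS.mem_dom_iff.2 ⟨t, hB⟩))
    | some tA =>
      cases hB : B.theta π with
      | none => simp [baseUnif, hA, hB]
      | some tB =>
        have hle : tB ≤ tA := h.2.2 π (PreAFS.mem_dom_iff.2 ⟨tB, hB⟩) tB tA hB hA
        simp [baseUnif, hA, hB, hle]
  · exact fun hxy => hxy.elim id (h.2.1 x y)

theorem cl_dom (A : PreAFS F T) : (Cl A).dom = clDom A := by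
  ext π
  by_cases h : π ∈ clDom A <;> simp [PreAFS.dom, Cl, h]

theorem absLE_cl (A : PreAFS F T) : AbsLE A (Cl A) := by
  refine ⟨cl_dom A ▸ subset_clDom A, fun x y h _ _ _ hR _ => hR x y h, ?_⟩
  intro π hπ t₁ t₂ hA hCl
  simp [Cl, subset_clDom A hπ, hA] at hCl
  exact hCl.le

theorem cl_eq_self_of_fusionClosed {A : PreAFS F T} (hA : FusionClosed A) : Cl A = A := by
  have hdom : clDom A = A.dom :=
    Set.Subset.antisymm (fun _ hπ => hπ A.dom A.rel subset_rfl (fun _ _ => id) hA)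
      (subset_clDom A)
  refine PreAFS.ext (funext fun π => ?_) (funext₂ fun x y => propext ?_)
  · by_cases hπ : π ∈ A.dom
    · obtain ⟨t, ht⟩ := PreAFS.mem_dom_iff.1 hπ
      simp [Cl, hdom, hπ, ht]
    · have hnone : A.theta π = none := by simpa [PreAFS.dom] using hπ
      simp [Cl, hdom, hπ, hnone]
  · exact ⟨fun h => h A.dom A.rel subset_rfl (fun _ _ => id) hA,
      fun h _ _ _ hR _ => hR x y h⟩

theorem ty_dom (A : PreAFS F T) : (Ty A).dom = A.dom := by
  ext π
  by_cases h : (A.theta π).isSome <;> simp [PreAFS.dom, Ty, h]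

theorem absLE_ty {A : PreAFS F T} (hrefl : ∀ π ∈ A.dom, A.rel π π) : AbsLE A (Ty A) := by
  refine ⟨(ty_dom A).ge, fun _ _ => id, fun π hπ t₁ t₂ hA hTy => ?_⟩
  simp only [Ty, hA, Option.isSome_some, if_true, Option.some_inj] at hTy
  exact hTy ▸ le_sSup ⟨π, hrefl π hπ, hA⟩

theorem ty_eq_self {A : PreAFS F T} (hrefl : ∀ π ∈ A.dom, A.rel π π) (hA : RespectsRel A) :
    Ty A = A := by
  refine PreAFS.ext (funext fun π => ?_) rfl
  by_cases hπ : π ∈ A.dom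
  · obtain ⟨t, ht⟩ := PreAFS.mem_dom_iff.1 hπ
    have hclass : {t' | ∃ π', A.rel π π' ∧ A.theta π' = some t'} = {t} := by
      ext t'
      refine ⟨fun ⟨π', hr, ht'⟩ => ?_, fun h => ⟨π, hrefl π hπ, h ▸ ht⟩⟩
      exact Option.some_inj.1 (ht' ▸ hA π π' hr ▸ ht)
    simp only [Ty, ht, Option.isSome_some, if_true, hclass, sSup_singleton]
  · have hnone : A.theta π = none := by simpa [PreAFS.dom] using hπ
    simp [Ty, hnone]

theorem absLE_unif_right (A B : PreAFS F T) : AbsLE B (unif A B) :=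
  (absLE_baseUnif_right A B).trans <| (absLE_cl _).trans <| (absLE_eqOp _).trans <|
    absLE_ty fun _ hπ => EqClo.refl hπ

end Unification

end

theorem unif_eq_left_iff_absLE_general
    {F T : Type*} [CompleteLattice T]
    (A B : PreAFS F T) (hA : IsAFS A) :
    unif A B = A ↔ AbsLE B A := by
  obtain ⟨-, -, hfusion, hequiv, -, hresp⟩ := hA
  refine ⟨fun h => h ▸ absLE_unif_right A B, fun hBA => ?_⟩
  rw [unif, baseUnif_eq_left_of_absLE hBA, cl_eq_self_of_fusionClosed hfusion,
    eqOp_eq_self_of_equivOnDom hequiv, ty_eq_self hequiv.1 hresp]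

/-- `A ⊔ B = A` iff `B ≼ A`. -/
theorem unif_eq_left_iff_absLE
    {F T : Type*} [Finite F] [Finite T] [CompleteLattice T]
    (A B : PreAFS F T) (hA : IsAFS A) (hB : IsAFS B) :
    unif A B = A ↔ AbsLE B A :=
  unif_eq_left_iff_absLE_general A B hA
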